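/- arXiv:2207.11058 — 7 statements merged into one kernel-verified Lean document; each statement's English description precedes it below -/
import Mathlib

section
/- A locality set (X, ⊤) is regular if and only if for all n ≥ 1 and all α, β, α_1, …, α_n, β_1, …, β_n ∈ X, whenever the pairs (α, β_1), (α_1, β_1), (α_1, β_2), (α_2, β_2), …, (α_n, β_n), (α_n, β) all lie in ⊤, one has (α, β) ∈ ⊤. -/
/-- A locality set `(X, ⊤)` is regular if whenever
`(α, β₁), (α₁, β₁), (α₁, β) ∈ ⊤` one also has `(α, β) ∈ ⊤`. -/
def IsRegularLocality {X : Type} (top : X → X → Prop) : Prop :=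
  ∀ α β α₁ β₁, top α β₁ → top α₁ β₁ → top α₁ β → top α β

theorem IsRegularLocality.top_start_of_zigzag {X : Type} {top : X → X → Prop}
    (hreg : IsRegularLocality top) {α : X} {a b : ℕ → X} {n : ℕ}
    (h1 : top α (b 1))
    (hb : ∀ i, 1 ≤ i → i ≤ n → top (a i) (b i))
    (hc : ∀ i, 1 ≤ i → i < n → top (a i) (b (i + 1)))
    {k : ℕ} (hk : 1 ≤ k) (hkn : k ≤ n) : top α (b k) := by
  induction k, hk using Nat.le_induction with
  | base => exact h1
  | succ k hk ih =>
    exact hreg α (b (k + 1)) (a k) (b k) (ih (by omega)) (hb k hk (by omega)) (hc k hk (by omega))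

/-- A locality set `(X, ⊤)` is regular if and only if for all `n ≥ 1` and all
`α, β, α₁, …, αₙ, β₁, …, βₙ ∈ X`, whenever the pairs
`(α, β₁), (α₁, β₁), (α₁, β₂), (α₂, β₂), …, (αₙ, βₙ), (αₙ, β)` all lie in `⊤`,
one has `(α, β) ∈ ⊤`. -/
theorem isRegularLocality_iff_chain {X : Type} (top : X → X → Prop) :
    IsRegularLocality top ↔
      ∀ (n : ℕ), 1 ≤ n → ∀ (α β : X) (a b : ℕ → X),
        top α (b 1) →
        (∀ i, 1 ≤ i → i ≤ n → top (a i) (b i)) →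
        (∀ i, 1 ≤ i → i < n → top (a i) (b (i + 1))) →
        top (a n) β →
        top α β := by
  constructor
  · intro hreg n hn α β a b h1 hb hc hlast
    have hαbn : top α (b n) := hreg.top_start_of_zigzag h1 hb hc hn le_rfl
    exact hreg α β (a n) (b n) hαbn (hb n hn le_rfl) hlast
  · intro hchain α β α₁ β₁ h1 h2 h3
    exact hchain 1 le_rfl α β (fun _ => α₁) (fun _ => β₁) h1 (fun _ _ _ => h2)
      (fun _ _ _ => by omega) h3
end

section
/- Let (X, ⊤) be a regular locality set and let Q_X = (Q0, Q1, s_Q, t_Q) be the quiver of X. Then for all α, β ∈ X (= Q1), one has (α, β) ∈ ⊤ if and only if t_Q(α) = s_Q(β). -/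
/-- On the disjoint union `X_s ⊔ X_t` of two copies of `X` (`Sum.inl` being the
source copy `X_s` and `Sum.inr` the target copy `X_t`), the relation
`α_t ∼ β_s` whenever `(α, β) ∈ ⊤`. -/
def locSim {X : Type} (top : X → X → Prop) : X ⊕ X → X ⊕ X → Prop :=
  fun u v => ∃ α β, top α β ∧ u = Sum.inr α ∧ v = Sum.inl β

/-- The vertex set of the quiver of a locality set `(X, ⊤)`: the quotient of
`X_s ⊔ X_t` by the equivalence relation generated by `∼`. -/
def locVertices {X : Type} (top : X → X → Prop) : Type :=
  Quot (locSim top)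

/-- The source map of the quiver of a locality set: `s_Q(α)` is the class of `α_s`. -/
def locSrc {X : Type} (top : X → X → Prop) (α : X) : locVertices top :=
  Quot.mk (locSim top) (Sum.inl α)

/-- The target map of the quiver of a locality set: `t_Q(α)` is the class of `α_t`. -/
def locTgt {X : Type} (top : X → X → Prop) (α : X) : locVertices top :=
  Quot.mk (locSim top) (Sum.inr α)

/-- The arrows leaving the vertex represented by `u`. Regularity is exactly what makes this
invariant under `∼`, so it descends to the vertices of the quiver. -/
def locOutArrows {X : Type} (top : X → X → Prop) : X ⊕ X → Set X
  | Sum.inl β => insert β {b | ∃ c, top c β ∧ top c b}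
  | Sum.inr α => {b | top α b}

lemma locOutArrows_eq_of_locSim {X : Type} {top : X → X → Prop} (hreg : IsRegularLocality top)
    {u v : X ⊕ X} (h : locSim top u v) : locOutArrows top u = locOutArrows top v := by
  obtain ⟨α, β, hαβ, rfl, rfl⟩ := h
  ext b
  constructor
  · exact fun hαb => Or.inr ⟨α, hαβ, hαb⟩
  · rintro (rfl | ⟨c, hcβ, hcb⟩)
    · exact hαβ
    · exact hreg α b c β hαβ hcβ hcb

lemma locTgt_eq_locSrc_of_top {X : Type} (top : X → X → Prop) {α β : X} (h : top α β) :
    locTgt top α = locSrc top β :=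
  Quot.sound ⟨α, β, h, rfl, rfl⟩

lemma top_of_locTgt_eq_locSrc {X : Type} (top : X → X → Prop) (hreg : IsRegularLocality top)
    {α β : X} (h : locTgt top α = locSrc top β) : top α β := by
  have hout : locOutArrows top (Sum.inr α) = locOutArrows top (Sum.inl β) :=
    congrArg (Quot.lift (locOutArrows top) fun _ _ => locOutArrows_eq_of_locSim hreg) h
  show β ∈ locOutArrows top (Sum.inr α)
  rw [hout]
  exact Set.mem_insert β _

/-- Let `(X, ⊤)` be a regular locality set and let `Q_X = (Q0, Q1, s_Q, t_Q)` be
the quiver of `X`. Then for all `α, β ∈ X (= Q1)`, one has `(α, β) ∈ ⊤` if and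
only if `t_Q(α) = s_Q(β)`. -/
theorem regular_top_iff_tgt_eq_src {X : Type} (top : X → X → Prop)
    (hreg : IsRegularLocality top) (α β : X) :
    top α β ↔ locTgt top α = locSrc top β :=
  ⟨locTgt_eq_locSrc_of_top top, top_of_locTgt_eq_locSrc top hreg⟩
end

section
/- Let (X, ⊤_X) be a locality set, let Q_X be the quiver of X, and let (X_{Q_X}, ⊤_{X_{Q_X}}) be the locality set of the quiver Q_X. Then X_{Q_X} = X as sets, ⊤_X ⊆ ⊤_{X_{Q_X}}, and (X_{Q_X}, ⊤_{X_{Q_X}}) is a regular locality set; explicitly, (α, β) ∈ ⊤_{X_{Q_X}} if and only if there exist n ≥ 0 and α_1, …, α_n, β_1, …, β_n ∈ X with (α, β_1), (α_1, β_1), (α_1, β_2), …, (α_n, β_n), (α_n, β) ∈ ⊤_X (where for n = 0 this means (α, β) ∈ ⊤_X). -/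
/-- The locality relation of the locality set of the quiver `Q_X` of a locality
set `(X, ⊤)`: the arrow set of `Q_X` is `X` itself, and
`⊤_{X_{Q_X}} = {(α, β) : t_Q(α) = s_Q(β)}`. -/
def topQX {X : Type} (top : X → X → Prop) : X → X → Prop :=
  fun α β => locTgt top α = locSrc top β

/-!
In the quiver `Q_X` two arrows `a, a'` have the same target as soon as they have a common
`⊤`-partner `b` (both `a_t` and `a'_t` are identified with `b_s`), and `(α, β) ∈ ⊤_{X_{Q_X}}`
says that `α_t` and `β_s` lie in one class. Conversely, the set of points of `X_s ⊔ X_t`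
reachable from `α_t` by zigzags of such common partners is closed under the generating relation,
so it is a union of classes; hence every element of the class of `α_t` is reached by a zigzag.
Regularity holds for the locality set of every quiver: `t α = s β₁ = t α₁ = s β`.
-/

open Relation

theorem Relation.reflTransGen_iff_exists_seq {α : Type*} {r : α → α → Prop} {x y : α} :
    ReflTransGen r x y ↔ ∃ n, ∃ f : ℕ → α, f 0 = x ∧ f n = y ∧ ∀ i < n, r (f i) (f (i + 1)) := by
  constructor
  · intro h
    induction h with
    | refl => exact ⟨0, fun _ => x, rfl, rfl, by simp⟩
    | @tail y z _ hyz ih =>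
      obtain ⟨n, f, hf0, hfn, hf⟩ := ih
      refine ⟨n + 1, fun i => if i ≤ n then f i else z, by simpa using hf0, by simp, fun i hi => ?_⟩
      rcases Nat.lt_succ_iff_lt_or_eq.1 hi with hi | rfl
      · simpa [hi.le, Nat.succ_le_of_lt hi] using hf i hi
      · simpa [hfn] using hyz
  · rintro ⟨n, f, rfl, rfl, hf⟩
    have reach : ∀ k ≤ n, ReflTransGen r (f 0) (f k) := by
      intro k hk
      induction k with
      | zero => exact .refl
      | succ k ih => exact (ih (by omega)).tail (hf k hk)
    exact reach n le_rfl

theorem isRegularLocality_tgt_eq_src {X V : Type} (s t : X → V) :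
    IsRegularLocality fun α β => t α = s β :=
  fun _ _ _ _ h₁ h₂ h₃ => h₁.trans (h₂.symm.trans h₃)

section LocalityQuiver

variable {X : Type} {top : X → X → Prop}

variable (top) in
def HasCommonPartner (a a' : X) : Prop :=
  ∃ b, top a b ∧ top a' b

variable (top) in
def ZigzagFrom (α : X) : X ⊕ X → Prop
  | .inr a => ReflTransGen (HasCommonPartner top) α a
  | .inl b => ∃ a, ReflTransGen (HasCommonPartner top) α a ∧ top a b

theorem zigzagFrom_iff_of_locSim {α : X} {u v : X ⊕ X} (h : locSim top u v) :
    ZigzagFrom top α u ↔ ZigzagFrom top α v := by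
  obtain ⟨a, b, hab, rfl, rfl⟩ := h
  exact ⟨fun ha => ⟨a, ha, hab⟩, fun ⟨a', ha', ha'b⟩ => ha'.tail ⟨b, ha'b, hab⟩⟩

theorem topQX_of_top {α β : X} (h : top α β) : topQX top α β :=
  Quot.sound ⟨α, β, h, rfl, rfl⟩

theorem locTgt_eq_of_reflTransGen {a a' : X} (h : ReflTransGen (HasCommonPartner top) a a') :
    locTgt top a = locTgt top a' := by
  induction h with
  | refl => rfl
  | tail _ hshare ih =>
    obtain ⟨b, hb, hb'⟩ := hshare
    exact ih.trans ((topQX_of_top hb).trans (topQX_of_top hb').symm)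

theorem topQX_iff_exists_reflTransGen {α β : X} :
    topQX top α β ↔ ∃ a, ReflTransGen (HasCommonPartner top) α a ∧ top a β := by
  refine ⟨fun h => ?_, fun ⟨a, ha, haβ⟩ => (locTgt_eq_of_reflTransGen ha).trans (topQX_of_top haβ)⟩
  have hclass := congrArg
    (Quot.lift (ZigzagFrom top α) fun _ _ huv => propext (zigzagFrom_iff_of_locSim huv)) h
  exact cast hclass (ReflTransGen.refl : ZigzagFrom top α (.inr α))

theorem exists_reflTransGen_hasCommonPartner_iff {α β : X} :
    (∃ a, ReflTransGen (HasCommonPartner top) α a ∧ top a β) ↔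
      (top α β ∨
        ∃ (n : ℕ), 1 ≤ n ∧ ∃ a b : ℕ → X,
          top α (b 1) ∧
          (∀ i, 1 ≤ i → i ≤ n → top (a i) (b i)) ∧
          (∀ i, 1 ≤ i → i < n → top (a i) (b (i + 1))) ∧
          top (a n) β) := by
  simp only [reflTransGen_iff_exists_seq]
  constructor
  · rintro ⟨_, ⟨n, f, rfl, rfl, hf⟩, hβ⟩
    cases n with
    | zero => exact .inl hβ
    | succ n =>
      have : Nonempty X := ⟨β⟩
      choose! c hc using hf
      refine .inr ⟨n + 1, by omega, f, fun i => c (i - 1), (hc 0 (by omega)).1, ?_, ?_, hβ⟩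
      · intro i hi₁ hi₂
        obtain ⟨k, rfl⟩ := Nat.exists_eq_add_of_le' hi₁
        simpa using (hc k (by omega)).2
      · intro i _ hi
        simpa using (hc i hi).1
  · rintro (hαβ | ⟨n, hn, a, b, hα, hdiag, hsuper, hβ⟩)
    · exact ⟨α, ⟨0, fun _ => α, rfl, rfl, by simp⟩, hαβ⟩
    refine ⟨a n, ⟨n, fun i => if i = 0 then α else a i, if_pos rfl, if_neg (by omega), fun i hi => ?_⟩, hβ⟩
    refine ⟨b (i + 1), ?_, by simpa using hdiag (i + 1) (by omega) (by omega)⟩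
    rcases Nat.eq_zero_or_pos i with rfl | hi₀
    · simpa using hα
    · simpa [hi₀.ne'] using hsuper i hi₀ hi

end LocalityQuiver

/-- Let `(X, ⊤_X)` be a locality set, `Q_X` its quiver, and `(X_{Q_X}, ⊤_{X_{Q_X}})`
the locality set of `Q_X` (whose underlying set is `X` itself). Then
`⊤_X ⊆ ⊤_{X_{Q_X}}`, the locality set `(X, ⊤_{X_{Q_X}})` is regular, and
explicitly `(α, β) ∈ ⊤_{X_{Q_X}}` if and only if there exist `n ≥ 0` and
`α₁, …, αₙ, β₁, …, βₙ ∈ X` with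
`(α, β₁), (α₁, β₁), (α₁, β₂), …, (αₙ, βₙ), (αₙ, β) ∈ ⊤_X`
(for `n = 0` this means `(α, β) ∈ ⊤_X`). -/
theorem localitySet_of_quiver_of_localitySet {X : Type} (top : X → X → Prop) :
    (∀ α β, top α β → topQX top α β) ∧
    IsRegularLocality (topQX top) ∧
    (∀ α β, topQX top α β ↔
      (top α β ∨
        ∃ (n : ℕ), 1 ≤ n ∧ ∃ a b : ℕ → X,
          top α (b 1) ∧
          (∀ i, 1 ≤ i → i ≤ n → top (a i) (b i)) ∧
          (∀ i, 1 ≤ i → i < n → top (a i) (b (i + 1))) ∧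
          top (a n) β)) :=
  ⟨fun _ _ => topQX_of_top, isRegularLocality_tgt_eq_src (locSrc top) (locTgt top),
    fun _ _ => topQX_iff_exists_reflTransGen.trans exists_reflTransGen_hasCommonPartner_iff⟩
end

section
/- Let Q = (Q0, Q1, s, t) be a quiver and let Q_{X_Q} = (Q0*, Q1*, s*, t*) be the quiver of the locality set X_Q of Q, so that Q1* = Q1. Define φ = (φ0, φ1) : Q_{X_Q} → Q by φ1 = id on arrows and φ0(class of α_s) = s(α), φ0(class of α_t) = t(α). Then φ is a well-defined quiver homomorphism, and (Q_{X_Q}, φ) is a full cover of Q: for every full quiver Q' and every quiver homomorphism ψ : Q' → Q, there exists a unique quiver homomorphism ψ̃ : Q' → Q_{X_Q} with φ ∘ ψ̃ = ψ. -/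
/-- A quiver is full if every vertex lies in `im(s) ∪ im(t)`, and every vertex
to which two or more arrows are attached lies in `im(s) ∩ im(t)`. -/
def IsFullQuiver {V A : Type} (s t : A → V) : Prop :=
  (∀ v : V, (∃ a, s a = v) ∨ (∃ a, t a = v)) ∧
  (∀ v : V, (∃ a b : A, a ≠ b ∧ (s a = v ∨ t a = v) ∧ (s b = v ∨ t b = v)) →
    ((∃ a, s a = v) ∧ (∃ a, t a = v)))

/-- The vertex component `φ0` of the quiver homomorphism
`φ : Q_{X_Q} → Q`, sending the class of `α_s` to `s(α)` and the class of
`α_t` to `t(α)`. -/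
def coverMap {Q0 Q1 : Type} (s t : Q1 → Q0) :
    locVertices (fun a b : Q1 => t a = s b) → Q0 :=
  Quot.lift (Sum.elim s t) (by
    rintro u v ⟨α, β, hab, rfl, rfl⟩
    simpa using hab)

/-!
Every vertex of a full quiver `Q'` is an endpoint of some arrow, so a lift `ψ̃` is forced by
`ψ̃₁ = ψ₁`: `ψ̃₀ (s' a)` must be the class of `(ψ₁ a)_s` and `ψ̃₀ (t' a)` the class of `(ψ₁ a)_t`.
These prescriptions agree because in a full quiver two arrows sharing an endpoint `v` always
come with a third arrow attached to `v` at the opposite end, through which the two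
endpoint classes are identified in `Q_{X_Q}`.
-/

open Function

section LocalityQuiver

variable {X : Type} {top : X → X → Prop}

theorem locTgt_eq_locSrc {α β : X} (h : top α β) : locTgt top α = locSrc top β :=
  Quot.sound ⟨α, β, h, rfl, rfl⟩

variable {Q0 Q1 : Type} (s t : Q1 → Q0)

@[simp]
theorem coverMap_locSrc (α : Q1) :
    coverMap s t (locSrc (fun a b : Q1 => t a = s b) α) = s α :=
  rfl

@[simp]
theorem coverMap_locTgt (α : Q1) :
    coverMap s t (locTgt (fun a b : Q1 => t a = s b) α) = t α :=
  rfl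

end LocalityQuiver

namespace IsFullQuiver

variable {V A : Type} {s' t' : A → V}

theorem surjective_sumElim (h : IsFullQuiver s' t') : Surjective (Sum.elim s' t') := by
  intro v
  obtain ⟨a, rfl⟩ | ⟨a, rfl⟩ := h.1 v
  exacts [⟨.inl a, rfl⟩, ⟨.inr a, rfl⟩]

theorem exists_tgt_eq_of_src_eq (h : IsFullQuiver s' t') {a b : A} (hab : a ≠ b)
    (he : s' a = s' b) : ∃ c, t' c = s' a :=
  (h.2 (s' a) ⟨a, b, hab, .inl rfl, .inl he.symm⟩).2

theorem exists_src_eq_of_tgt_eq (h : IsFullQuiver s' t') {a b : A} (hab : a ≠ b)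
    (he : t' a = t' b) : ∃ c, s' c = t' a :=
  (h.2 (t' a) ⟨a, b, hab, .inr rfl, .inr he.symm⟩).1

variable {X : Type} {top : X → X → Prop} {f : A → X}

theorem factorsThrough_sumElim (h : IsFullQuiver s' t')
    (hf : ∀ a b, t' a = s' b → top (f a) (f b)) :
    (Sum.elim (fun a => locSrc top (f a)) (fun a => locTgt top (f a))).FactorsThrough
      (Sum.elim s' t') := by
  rintro (a | a) (b | b) he <;> simp only [Sum.elim_inl, Sum.elim_inr] at he ⊢
  · rcases eq_or_ne a b with rfl | hab
    · rfl
    obtain ⟨c, hc⟩ := h.exists_tgt_eq_of_src_eq hab he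
    rw [← locTgt_eq_locSrc (hf c a hc), locTgt_eq_locSrc (hf c b (hc.trans he))]
  · exact (locTgt_eq_locSrc (hf b a he.symm)).symm
  · exact locTgt_eq_locSrc (hf a b he)
  · rcases eq_or_ne a b with rfl | hab
    · rfl
    obtain ⟨c, hc⟩ := h.exists_src_eq_of_tgt_eq hab he
    rw [locTgt_eq_locSrc (hf a c hc.symm), locTgt_eq_locSrc (hf b c (hc.trans he).symm)]

theorem existsUnique_vertexMap (h : IsFullQuiver s' t')
    (hf : ∀ a b, t' a = s' b → top (f a) (f b)) :
    ∃! F : V → locVertices top,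
      (∀ a, locSrc top (f a) = F (s' a)) ∧ (∀ a, locTgt top (f a) = F (t' a)) := by
  set g := Sum.elim (fun a => locSrc top (f a)) (fun a => locTgt top (f a))
  have he := h.surjective_sumElim
  have hg := h.factorsThrough_sumElim hf
  suffices ∃! F, F ∘ Sum.elim s' t' = g by
    simpa only [funext_iff, Sum.forall, comp_apply, Sum.elim_inl, Sum.elim_inr, g, eq_comm]
      using this
  have hlift : (g ∘ surjInv he) ∘ Sum.elim s' t' = g := funext fun u => hg (surjInv_eq he _)
  exact ⟨g ∘ surjInv he, hlift, fun F hF => he.injective_comp_right (hF.trans hlift.symm)⟩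

end IsFullQuiver

/-- Let `Q = (Q0, Q1, s, t)` be a quiver and `Q_{X_Q} = (Q0*, Q1*, s*, t*)` the
quiver of the locality set `X_Q` of `Q`, so `Q1* = Q1`.  The pair
`φ = (φ0, φ1)` with `φ1 = id` and `φ0` as above is a quiver homomorphism
`Q_{X_Q} → Q`, and `(Q_{X_Q}, φ)` is a full cover of `Q`: for every full quiver
`Q' = (V, A, s', t')` and every quiver homomorphism `ψ = (ψ0, ψ1) : Q' → Q`,
there is a unique quiver homomorphism `ψ̃ = (ψ̃0, ψ̃1) : Q' → Q_{X_Q}` with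
`φ ∘ ψ̃ = ψ`. -/
theorem quiver_of_localitySet_is_full_cover {Q0 Q1 : Type} (s t : Q1 → Q0) :
    (∀ α : Q1, coverMap s t (locSrc (fun a b : Q1 => t a = s b) α) = s α) ∧
    (∀ α : Q1, coverMap s t (locTgt (fun a b : Q1 => t a = s b) α) = t α) ∧
    (∀ (V A : Type) (s' t' : A → V), IsFullQuiver s' t' →
      ∀ (ψ0 : V → Q0) (ψ1 : A → Q1),
        (∀ a : A, s (ψ1 a) = ψ0 (s' a)) → (∀ a : A, t (ψ1 a) = ψ0 (t' a)) →
        ∃! p : (V → locVertices (fun a b : Q1 => t a = s b)) × (A → Q1),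
          ((∀ a : A, locSrc (fun a b : Q1 => t a = s b) (p.2 a) = p.1 (s' a)) ∧
           (∀ a : A, locTgt (fun a b : Q1 => t a = s b) (p.2 a) = p.1 (t' a))) ∧
          ((∀ v : V, coverMap s t (p.1 v) = ψ0 v) ∧
           (∀ a : A, p.2 a = ψ1 a))) := by
  refine ⟨coverMap_locSrc s t, coverMap_locTgt s t, fun V A s' t' hfull ψ0 ψ1 hs ht => ?_⟩
  have hcomp : ∀ a b, t' a = s' b → t (ψ1 a) = s (ψ1 b) := fun a b hab => by
    rw [ht, hab, hs]
  obtain ⟨F, ⟨hFs, hFt⟩, hF_unique⟩ :=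
    hfull.existsUnique_vertexMap (top := fun a b => t a = s b) hcomp
  refine ⟨(F, ψ1), ⟨⟨hFs, hFt⟩, fun v => ?_, fun _ => rfl⟩, ?_⟩
  · show coverMap s t (F v) = ψ0 v
    obtain ⟨a, rfl⟩ | ⟨a, rfl⟩ := hfull.1 v
    · rw [← hFs, coverMap_locSrc, hs]
    · rw [← hFt, coverMap_locTgt, ht]
  · rintro ⟨G, χ⟩ ⟨hG, -, hχ⟩
    obtain rfl : χ = ψ1 := funext hχ
    rw [hF_unique G hG]
end

section
/- Let (X, ⊤_X) be a regular locality set, let Q_X be the quiver of X, and let (X_{Q_X}, ⊤_{X_{Q_X}}) be the locality set of the quiver Q_X. Then (X_{Q_X}, ⊤_{X_{Q_X}}) = (X, ⊤_X): the underlying sets are equal and ⊤_{X_{Q_X}} = ⊤_X. -/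
/-!
In the quiver of a regular locality set, the arrows ending at a vertex can be read off any
representative: at `β_s` they are the `α'` with `α' ⊤ β`, and at `α_t` they are `α` together with
the `α'` sharing a successor with `α`. Regularity is exactly what makes these two descriptions agree
whenever `α ⊤ β`, so "arrows into" descends to the vertex set. Since `α` ends at `t(α)`,
`t(α) = s(β)` then forces `α ⊤ β`.
-/

namespace IsRegularLocality

variable {X : Type} {top : X → X → Prop}

variable (top) in
def arrowsIntoRep : X ⊕ X → Set X
  | .inl β => {α | top α β}
  | .inr α => insert α {α' | ∃ β, top α β ∧ top α' β}

theorem arrowsIntoRep_eq_of_locSim (hreg : IsRegularLocality top) {u v : X ⊕ X}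
    (h : locSim top u v) : arrowsIntoRep top u = arrowsIntoRep top v := by
  obtain ⟨α, β, hαβ, rfl, rfl⟩ := h
  ext α'
  simp only [arrowsIntoRep, Set.mem_insert_iff, Set.mem_ofPred_eq]
  constructor
  · rintro (rfl | ⟨β', hαβ', hα'β'⟩)
    · exact hαβ
    · exact hreg α' β α β' hα'β' hαβ' hαβ
  · exact fun hα'β => Or.inr ⟨β, hαβ, hα'β⟩

def arrowsInto (hreg : IsRegularLocality top) : locVertices top → Set X :=
  Quot.lift (arrowsIntoRep top) fun _ _ => hreg.arrowsIntoRep_eq_of_locSim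

theorem arrowsInto_locSrc (hreg : IsRegularLocality top) (β : X) :
    hreg.arrowsInto (locSrc top β) = {α | top α β} :=
  rfl

theorem mem_arrowsInto_locTgt (hreg : IsRegularLocality top) (α : X) :
    α ∈ hreg.arrowsInto (locTgt top α) :=
  Set.mem_insert α _

end IsRegularLocality

/-- Let `(X, ⊤_X)` be a regular locality set, `Q_X` its quiver, and
`(X_{Q_X}, ⊤_{X_{Q_X}})` the locality set of the quiver `Q_X`.  Then
`(X_{Q_X}, ⊤_{X_{Q_X}}) = (X, ⊤_X)`: the underlying sets are equal (both are
`X`) and `⊤_{X_{Q_X}} = ⊤_X`. -/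
theorem localitySet_of_quiver_of_regular_localitySet_eq {X : Type}
    (top : X → X → Prop) (hreg : IsRegularLocality top) :
    (fun α β : X => locTgt top α = locSrc top β) = top := by
  funext α β
  apply propext
  constructor
  · intro h
    have hα := hreg.mem_arrowsInto_locTgt α
    rwa [h, hreg.arrowsInto_locSrc] at hα
  · intro h
    exact Quot.sound ⟨α, β, h, rfl, rfl⟩
end

section
/- Let (S, ⊤_S) be a fine locality semigroup, let (X, ⊤_X) be a locality set, let f : (X, ⊤_X) → (S, ⊤_S) be a locality map, let n ≥ 2, and let x_1, …, x_n ∈ X with (x_i, x_{i+1}) ∈ ⊤_X for i = 1, …, n−1. Then the iterated products f(x_1)⋯f(x_{n−1}) and f(x_2)⋯f(x_n) are defined in S, and (f(x_1)⋯f(x_{n−1}), f(x_n)) ∈ ⊤_S and (f(x_1), f(x_2)⋯f(x_n)) ∈ ⊤_S. -/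
/-!
In a fine locality semigroup an iterated product `u = a₁(a₂(⋯aₖ))` inherits the relations of its
end factors: `(s, a₁) ∈ ⊤` gives `(s, u) ∈ ⊤` by the second fineness condition, and `(aₖ, t) ∈ ⊤`
gives `(u, t) ∈ ⊤` by the first one, applied once per factor. Applied to the head factor, this
lets the product of any `⊤`-chain be built from the right, so `f(x₁)⋯f(x_{n−1})` and
`f(x₂)⋯f(xₙ)` exist, and the relations `(f(xₙ₋₁), f(xₙ))` and `(f(x₁), f(x₂))` transfer to the
required ones.
-/

/-- A locality semigroup `(S, ⊤, μ)`: a set with a locality relation `rel` and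
a multiplication `mul` (only its values on pairs in `rel` are relevant, so that
`mul` encodes the partial multiplication `μ : ⊤ → S`), such that whenever
`(a,b), (a,c), (b,c) ∈ ⊤` one has `(ab,c), (a,bc) ∈ ⊤` and `(ab)c = a(bc)`. -/
structure LocalitySemigroup (S : Type) where
  rel : S → S → Prop
  mul : S → S → S
  rel_mul_left : ∀ {a b c : S}, rel a b → rel a c → rel b c → rel (mul a b) c
  rel_mul_right : ∀ {a b c : S}, rel a b → rel a c → rel b c → rel a (mul b c)
  mul_assoc : ∀ {a b c : S}, rel a b → rel a c → rel b c →
    mul (mul a b) c = mul a (mul b c)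

/-- A locality semigroup is fine if for all `a, b, c`: when `(a,b) ∈ ⊤`,
`(ab,c) ∈ ⊤` iff `(b,c) ∈ ⊤`; and when `(b,c) ∈ ⊤`, `(a,bc) ∈ ⊤` iff
`(a,b) ∈ ⊤`. -/
def LocalitySemigroup.Fine {S : Type} (L : LocalitySemigroup S) : Prop :=
  (∀ a b c : S, L.rel a b → (L.rel (L.mul a b) c ↔ L.rel b c)) ∧
  (∀ a b c : S, L.rel b c → (L.rel a (L.mul b c) ↔ L.rel a b))

/-- `IsLocProd rel mul l u` asserts that the iterated product (by successive
multiplications) of the list `l` of elements is defined — each successive pair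
being in the locality relation — and equals `u`. -/
inductive IsLocProd {S : Type} (rel : S → S → Prop) (mul : S → S → S) :
    List S → S → Prop
  | single (a : S) : IsLocProd rel mul [a] a
  | cons {l : List S} {u : S} (a : S) :
      rel a u → IsLocProd rel mul l u → IsLocProd rel mul (a :: l) (mul a u)

namespace LocalitySemigroup.Fine

variable {S : Type} {L : LocalitySemigroup S}

theorem rel_of_rel_head (hfine : L.Fine) {l : List S} {u a s : S}
    (hu : IsLocProd L.rel L.mul l u) (ha : l.head? = some a) (hs : L.rel s a) :
    L.rel s u := by
  cases hu with
  | single => simp_all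
  | cons b hbu _ =>
    obtain rfl : b = a := by simpa using ha
    exact (hfine.2 s b _ hbu).mpr hs

theorem rel_of_rel_getLast (hfine : L.Fine) {l : List S} {u b t : S}
    (hu : IsLocProd L.rel L.mul l u) (hb : l.getLast? = some b) (ht : L.rel b t) :
    L.rel u t := by
  induction hu with
  | single => simp_all
  | cons a hau hl ih =>
    cases hl <;> rw [List.getLast?_cons_cons] at hb
    all_goals exact (hfine.1 a _ t hau).mpr (ih hb)

theorem exists_isLocProd_of_isChain (hfine : L.Fine) :
    ∀ {l : List S}, l ≠ [] → l.IsChain L.rel → ∃ u, IsLocProd L.rel L.mul l u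
  | [a], _, _ => ⟨a, .single a⟩
  | a :: b :: l, _, hchain => by
    obtain ⟨hab, hchain⟩ := List.isChain_cons_cons.mp hchain
    obtain ⟨u, hu⟩ := exists_isLocProd_of_isChain hfine (List.cons_ne_nil b l) hchain
    exact ⟨L.mul a u, .cons a (hfine.rel_of_rel_head hu rfl hab) hu⟩

theorem exists_isLocProd_range_map (hfine : L.Fine) (m : ℕ) (g : ℕ → S)
    (hg : ∀ i < m, L.rel (g i) (g (i + 1))) :
    ∃ u, IsLocProd L.rel L.mul ((List.range (m + 1)).map g) u ∧
      (∀ t, L.rel (g m) t → L.rel u t) ∧ (∀ s, L.rel s (g 0) → L.rel s u) := by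
  have hchain : ((List.range (m + 1)).map g).IsChain L.rel := by
    rw [List.isChain_map, List.isChain_range_succ]
    exact hg
  obtain ⟨u, hu⟩ := hfine.exists_isLocProd_of_isChain (by simp) hchain
  refine ⟨u, hu, fun t ↦ hfine.rel_of_rel_getLast hu ?_, fun s ↦ hfine.rel_of_rel_head hu ?_⟩
  · simp [List.getLast?_map, List.getLast?_range]
  · simp [List.head?_map, List.head?_range]

end LocalitySemigroup.Fine

/-- Let `(S, ⊤_S)` be a fine locality semigroup, `(X, ⊤_X)` a locality set,
`f : (X, ⊤_X) → (S, ⊤_S)` a locality map, `n ≥ 2`, and `x₁, …, xₙ ∈ X` with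
`(xᵢ, xᵢ₊₁) ∈ ⊤_X` for `i = 1, …, n−1`.  Then the iterated products
`f(x₁)⋯f(x_{n−1})` and `f(x₂)⋯f(xₙ)` are defined in `S`, and
`(f(x₁)⋯f(x_{n−1}), f(xₙ)) ∈ ⊤_S` and `(f(x₁), f(x₂)⋯f(xₙ)) ∈ ⊤_S`. -/
theorem fine_locality_semigroup_prod_rel {S : Type} (L : LocalitySemigroup S)
    (hfine : L.Fine) {X : Type} (topX : X → X → Prop) (f : X → S)
    (hf : ∀ a b, topX a b → L.rel (f a) (f b))
    (n : ℕ) (hn : 2 ≤ n) (x : ℕ → X)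
    (hx : ∀ i, 1 ≤ i → i < n → topX (x i) (x (i + 1))) :
    ∃ u v : S,
      IsLocProd L.rel L.mul ((List.range (n - 1)).map (fun i => f (x (i + 1)))) u ∧
      IsLocProd L.rel L.mul ((List.range (n - 1)).map (fun i => f (x (i + 2)))) v ∧
      L.rel u (f (x n)) ∧ L.rel (f (x 1)) v := by
  obtain ⟨m, rfl⟩ : ∃ m, n = m + 2 := ⟨n - 2, by omega⟩
  have hfx : ∀ i, 1 ≤ i → i ≤ m + 1 → L.rel (f (x i)) (f (x (i + 1))) :=
    fun i hi₁ hi₂ ↦ hf _ _ (hx i hi₁ (by omega))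
  obtain ⟨u, hu, hu_last, -⟩ := hfine.exists_isLocProd_range_map m (fun i ↦ f (x (i + 1)))
    fun i hi ↦ hfx (i + 1) (by omega) (by omega)
  obtain ⟨v, hv, -, hv_head⟩ := hfine.exists_isLocProd_range_map m (fun i ↦ f (x (i + 2)))
    fun i hi ↦ hfx (i + 2) (by omega) (by omega)
  exact ⟨u, v, hu, hv, hu_last _ (hfx (m + 1) (by omega) le_rfl),
    hv_head _ (hfx 1 le_rfl (by omega))⟩
end

section
/- Let (S, ⊤_S) be a fine locality semigroup, let (X, ⊤_X) be a locality set, let f : (X, ⊤_X) → (S, ⊤_S) be a locality map, and let m, n ≥ 1. Let x_1, …, x_m, y_1, …, y_n ∈ X with (x_i, x_{i+1}) ∈ ⊤_X for i = 1, …, m−1, (y_j, y_{j+1}) ∈ ⊤_X for j = 1, …, n−1, and (x_m, y_1) ∈ ⊤_X. Then the iterated products f(x_1)⋯f(x_m) and f(y_1)⋯f(y_n) are defined in S and (f(x_1)⋯f(x_m), f(y_1)⋯f(y_n)) ∈ ⊤_S. -/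
/-!
In a fine locality semigroup, locality with an iterated product is decided by a single
factor: `(a, s₁⋯sₖ) ∈ ⊤` iff `(a, s₁) ∈ ⊤`, and `(s₁⋯sₖ, d) ∈ ⊤` iff `(sₖ, d) ∈ ⊤`.
Building the product from the right, the first equivalence shows that every chain of pairwise local
neighbours has an iterated product; combining both, the product of the `f(xᵢ)` is local
with that of the `f(yⱼ)` because `(f(x_m), f(y₁)) ∈ ⊤`.
-/

namespace IsLocProd

variable {S : Type} {rel : S → S → Prop} {mul : S → S → S}

theorem ne_nil {l : List S} {u : S} (h : IsLocProd rel mul l u) : l ≠ [] := by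
  cases h <;> simp

end IsLocProd

namespace LocalitySemigroup

variable {S : Type} {L : LocalitySemigroup S}

theorem Fine.rel_isLocProd_iff (hL : L.Fine) {l : List S} {v : S}
    (hv : IsLocProd L.rel L.mul l v) {a b : S} (hb : l.head? = some b) :
    L.rel a v ↔ L.rel a b := by
  induction hv with
  | single => cases hb; rfl
  | cons _ hcu _ _ => cases hb; exact hL.2 a b _ hcu

theorem Fine.isLocProd_rel_iff (hL : L.Fine) {l : List S} {u : S}
    (hu : IsLocProd L.rel L.mul l u) {c d : S} (hc : l.getLast? = some c) :
    L.rel u d ↔ L.rel c d := by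
  induction hu with
  | single => cases hc; rfl
  | cons a hau hl ih =>
    obtain ⟨b, t, rfl⟩ := List.exists_cons_of_ne_nil hl.ne_nil
    rw [List.getLast?_cons_cons] at hc
    exact (hL.1 a _ d hau).trans (ih hc)

theorem Fine.exists_isLocProd (hL : L.Fine) {l : List S} (hchain : l.IsChain L.rel)
    (hne : l ≠ []) : ∃ u, IsLocProd L.rel L.mul l u := by
  induction l with
  | nil => exact absurd rfl hne
  | cons a t ih =>
    cases t with
    | nil => exact ⟨a, .single a⟩
    | cons b t =>
      obtain ⟨hab, htail⟩ := List.isChain_cons_cons.mp hchain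
      obtain ⟨u, hu⟩ := ih htail (List.cons_ne_nil b t)
      exact ⟨L.mul a u, .cons a ((hL.rel_isLocProd_iff hu rfl).mpr hab) hu⟩

end LocalitySemigroup

theorem List.isChain_map_range_succ {X : Type} {r : X → X → Prop} (x : ℕ → X) (n : ℕ)
    (h : ∀ i, 1 ≤ i → i < n → r (x i) (x (i + 1))) :
    ((List.range n).map fun i => x (i + 1)).IsChain r := by
  rw [List.isChain_map, List.isChain_range]
  exact fun i hi => h (i + 1) (Nat.le_add_left 1 i) (by omega)

/-- Let `(S, ⊤_S)` be a fine locality semigroup, `(X, ⊤_X)` a locality set,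
`f : (X, ⊤_X) → (S, ⊤_S)` a locality map, and `m, n ≥ 1`.  Let
`x₁, …, x_m, y₁, …, yₙ ∈ X` with `(xᵢ, xᵢ₊₁) ∈ ⊤_X` for `i = 1, …, m−1`,
`(y_j, y_{j+1}) ∈ ⊤_X` for `j = 1, …, n−1`, and `(x_m, y₁) ∈ ⊤_X`.  Then the
iterated products `f(x₁)⋯f(x_m)` and `f(y₁)⋯f(yₙ)` are defined in `S` and
`(f(x₁)⋯f(x_m), f(y₁)⋯f(yₙ)) ∈ ⊤_S`. -/
theorem fine_locality_semigroup_prod_rel_prod {S : Type} (L : LocalitySemigroup S)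
    (hfine : L.Fine) {X : Type} (topX : X → X → Prop) (f : X → S)
    (hf : ∀ a b, topX a b → L.rel (f a) (f b))
    (m n : ℕ) (hm : 1 ≤ m) (hn : 1 ≤ n) (x y : ℕ → X)
    (hx : ∀ i, 1 ≤ i → i < m → topX (x i) (x (i + 1)))
    (hy : ∀ j, 1 ≤ j → j < n → topX (y j) (y (j + 1)))
    (hxy : topX (x m) (y 1)) :
    ∃ u v : S,
      IsLocProd L.rel L.mul ((List.range m).map (fun i => f (x (i + 1)))) u ∧
      IsLocProd L.rel L.mul ((List.range n).map (fun j => f (y (j + 1)))) v ∧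
      L.rel u v := by
  have chain_of (z : ℕ → X) (k : ℕ) (hz : ∀ i, 1 ≤ i → i < k → topX (z i) (z (i + 1))) :
      ((List.range k).map fun i => f (z (i + 1))).IsChain L.rel := by
    simpa only [List.map_map, Function.comp_def] using
      List.isChain_map_of_isChain f hf (List.isChain_map_range_succ z k hz)
  obtain ⟨u, hu⟩ := hfine.exists_isLocProd (chain_of x m hx)
    (List.ne_nil_of_length_pos (by rwa [List.length_map, List.length_range]))
  obtain ⟨v, hv⟩ := hfine.exists_isLocProd (chain_of y n hy)
    (List.ne_nil_of_length_pos (by rwa [List.length_map, List.length_range]))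
  have hlast : ((List.range m).map fun i => f (x (i + 1))).getLast? = some (f (x m)) := by
    obtain ⟨k, rfl⟩ := Nat.exists_eq_add_of_le' hm
    simp [List.range_succ]
  have hhead : ((List.range n).map fun j => f (y (j + 1))).head? = some (f (y 1)) := by
    obtain ⟨k, rfl⟩ := Nat.exists_eq_add_of_le' hn
    simp [List.range_succ_eq_map]
  refine ⟨u, v, hu, hv, ?_⟩
  rw [hfine.isLocProd_rel_iff hu hlast, hfine.rel_isLocProd_iff hv hhead]
  exact hf _ _ hxy
end
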